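/- There exists a set S ⊆ [ℕ]^∞ of cardinality 𝔡 such that the subspace S ∪ Fin of the Cantor space 𝒫(ℕ) is Menger but not Hurewicz. -/

import Mathlib

open Set Filter Cardinal

namespace OmissionOfIntervals

/-- The Cantor space `𝒫(ℕ)`, identified with `ℕ → Bool` via characteristic functions,
with the product topology. -/
abbrev CantorSp : Type := ℕ → Bool

/-- `Fin`: the points of the Cantor space coding finite subsets of `ℕ`. -/
def CFin : Set CantorSp := {x | {n | x n = true}.Finite}

/-- `[ℕ]^∞`: the points of the Cantor space coding infinite subsets of `ℕ`. -/
def CInf : Set CantorSp := {x | {n | x n = true}.Infinite}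

/-- Increasing enumeration of the subset of `ℕ` coded by `x`. -/
noncomputable def enum (x : CantorSp) : ℕ → ℕ := Nat.nth (fun n => x n = true)

/-- `f ≤* g`: `f n ≤ g n` for all but finitely many `n`. -/
def LeStar (f g : ℕ → ℕ) : Prop := ∀ᶠ n in atTop, f n ≤ g n

/-- `a ⊆* b`: the set coded by `a` is almost contained in the set coded by `b`. -/
def SubStar (a b : CantorSp) : Prop := {n | a n = true ∧ ¬ b n = true}.Finite

/-- A dominating family in the Baire space. -/
def Dominating (S : Set (ℕ → ℕ)) : Prop := ∀ f : ℕ → ℕ, ∃ s ∈ S, LeStar f s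

/-- An unbounded (with respect to `≤*`) family in the Baire space. -/
def UnboundedFam (S : Set (ℕ → ℕ)) : Prop := ¬ ∃ g : ℕ → ℕ, ∀ s ∈ S, LeStar s g

/-- The dominating number `𝔡`. -/
noncomputable def frd : Cardinal := sInf {c | ∃ S : Set (ℕ → ℕ), Dominating S ∧ #S = c}

/-- The bounding number `𝔟`. -/
noncomputable def frb : Cardinal := sInf {c | ∃ S : Set (ℕ → ℕ), UnboundedFam S ∧ #S = c}

/-- A centered family of infinite subsets of `ℕ`: every finite subfamily has infinite
intersection. -/
def Centered (S : Set CantorSp) : Prop :=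
  S ⊆ CInf ∧ ∀ F : Finset CantorSp, ↑F ⊆ S → {n | ∀ x ∈ F, x n = true}.Infinite

/-- `S` has a pseudointersection: an infinite set almost contained in every member of `S`. -/
def HasPseudointersection (S : Set CantorSp) : Prop := ∃ a ∈ CInf, ∀ s ∈ S, SubStar a s

/-- The pseudointersection number `𝔭`. -/
noncomputable def frp : Cardinal :=
  sInf {c | ∃ S : Set CantorSp, Centered S ∧ ¬ HasPseudointersection S ∧ #S = c}

/-- `S ⊆ [ℕ]^∞` is `κ`-unbounded: `|S| ≥ κ` and for every `b : ℕ → ℕ` only `< κ` many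
members of `S` satisfy `s(n) ≤ b(n)` for all `n` (via increasing enumerations). -/
def KappaUnbounded (κ : Cardinal) (S : Set CantorSp) : Prop :=
  κ ≤ #S ∧ ∀ b : ℕ → ℕ, #{s ∈ S | ∀ n, enum s n ≤ b n} < κ

/-- `X` is `κ`-concentrated on `CFin`: `|X| ≥ κ` and `|X ∖ U| < κ` for every open
`U ⊇ CFin`. -/
def KappaConcentrated (κ : Cardinal) (X : Set CantorSp) : Prop :=
  κ ≤ #X ∧ ∀ U : Set CantorSp, IsOpen U → CFin ⊆ U → #(X \ U : Set CantorSp) < κ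

/-- An open cover of the space `X`. -/
def IsOpenCover {X : Type*} [TopologicalSpace X] (𝒰 : Set (Set X)) : Prop :=
  (∀ U ∈ 𝒰, IsOpen U) ∧ ⋃₀ 𝒰 = Set.univ

/-- A point-cofinite (γ-) open cover of the space `X`: an infinite family of open sets such
that every point belongs to all but finitely many members. -/
def PointCofiniteCover {X : Type*} [TopologicalSpace X] (𝒰 : Set (Set X)) : Prop :=
  (∀ U ∈ 𝒰, IsOpen U) ∧ 𝒰.Infinite ∧ ∀ x : X, {U ∈ 𝒰 | x ∉ U}.Finite

/-- An ω-cover of the space `X`: no member contains all of `X`, and every finite subset of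
`X` is contained in some member. -/
def OmegaCover {X : Type*} [TopologicalSpace X] (𝒰 : Set (Set X)) : Prop :=
  (∀ U ∈ 𝒰, IsOpen U) ∧ (∀ U ∈ 𝒰, U ≠ Set.univ) ∧ ∀ F : Finset X, ∃ U ∈ 𝒰, ↑F ⊆ U

/-- An ω-cover of the subset `Y` by open subsets of the ambient space `X`. -/
def OmegaCoverOf {X : Type*} [TopologicalSpace X] (𝒰 : Set (Set X)) (Y : Set X) : Prop :=
  (∀ U ∈ 𝒰, IsOpen U) ∧ (∀ U ∈ 𝒰, ¬ Y ⊆ U) ∧ ∀ F : Finset X, ↑F ⊆ Y → ∃ U ∈ 𝒰, ↑F ⊆ U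

/-- The Menger property. -/
def Menger (X : Type*) [TopologicalSpace X] : Prop :=
  ∀ 𝒰 : ℕ → Set (Set X), (∀ n, IsOpenCover (𝒰 n)) →
    ∃ 𝓕 : ℕ → Set (Set X), (∀ n, 𝓕 n ⊆ 𝒰 n ∧ (𝓕 n).Finite) ∧ ⋃₀ (⋃ n, 𝓕 n) = Set.univ

/-- The Hurewicz property. -/
def Hurewicz (X : Type*) [TopologicalSpace X] : Prop :=
  ∀ 𝒰 : ℕ → Set (Set X), (∀ n, IsOpenCover (𝒰 n)) →
    (∀ n, ¬ ∃ 𝓕 ⊆ 𝒰 n, 𝓕.Finite ∧ ⋃₀ 𝓕 = Set.univ) →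
    ∃ 𝓕 : ℕ → Set (Set X), (∀ n, 𝓕 n ⊆ 𝒰 n ∧ (𝓕 n).Finite) ∧
      ∀ x : X, ∀ᶠ n in atTop, x ∈ ⋃₀ 𝓕 n

/-- The property `S1(Γ,Γ)`. -/
def S1GammaGamma (X : Type*) [TopologicalSpace X] : Prop :=
  ∀ 𝒰 : ℕ → Set (Set X), (∀ n, PointCofiniteCover (𝒰 n)) →
    ∃ U : ℕ → Set X, (∀ n, U n ∈ 𝒰 n) ∧ ∀ x : X, ∀ᶠ n in atTop, x ∈ U n

/-- The property `S1(Γ,O)`. -/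
def S1GammaO (X : Type*) [TopologicalSpace X] : Prop :=
  ∀ 𝒰 : ℕ → Set (Set X), (∀ n, PointCofiniteCover (𝒰 n)) →
    ∃ U : ℕ → Set X, (∀ n, U n ∈ 𝒰 n) ∧ (⋃ n, U n) = Set.univ

/-- The property `S1(Ω,Γ)`. -/
def S1OmegaGamma (X : Type*) [TopologicalSpace X] : Prop :=
  ∀ 𝒰 : ℕ → Set (Set X), (∀ n, OmegaCover (𝒰 n)) →
    ∃ U : ℕ → Set X, (∀ n, U n ∈ 𝒰 n) ∧ ∀ x : X, ∀ᶠ n in atTop, x ∈ U n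

/-- `X` is an ω-γ set: every open ω-cover has a subfamily that is a point-cofinite cover. -/
def OmegaGammaSet (X : Type*) [TopologicalSpace X] : Prop :=
  ∀ 𝒰 : Set (Set X), OmegaCover 𝒰 → ∃ 𝒱 ⊆ 𝒰, PointCofiniteCover 𝒱

/-- The property `U_k(Γ,Γ)`. -/
def UkGammaGamma (k : ℕ) (X : Type*) [TopologicalSpace X] : Prop :=
  ∀ 𝒰 : ℕ → Set (Set X), (∀ n, PointCofiniteCover (𝒰 n)) →
    (∀ n, ¬ ∃ 𝓕 : Finset (Set X), ↑𝓕 ⊆ 𝒰 n ∧ 𝓕.card ≤ k ∧ ⋃₀ (↑𝓕 : Set (Set X)) = Set.univ) →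
    ∃ 𝓕 : ℕ → Finset (Set X), (∀ n, ↑(𝓕 n) ⊆ 𝒰 n ∧ (𝓕 n).card ≤ k) ∧
      ∀ x : X, ∀ᶠ n in atTop, x ∈ ⋃₀ ((𝓕 n : Finset (Set X)) : Set (Set X))

/-- The property `U_id(Γ,Γ)`. -/
def UidGammaGamma (X : Type*) [TopologicalSpace X] : Prop :=
  ∀ 𝒰 : ℕ → Set (Set X), (∀ n, PointCofiniteCover (𝒰 n)) →
    (∀ n, ¬ ∃ 𝓕 : Finset (Set X), ↑𝓕 ⊆ 𝒰 n ∧ ⋃₀ (↑𝓕 : Set (Set X)) = Set.univ) →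
    ∃ 𝓕 : ℕ → Finset (Set X), (∀ n, ↑(𝓕 n) ⊆ 𝒰 n ∧ (𝓕 n).card ≤ n) ∧
      ∀ x : X, ∀ᶠ n in atTop, x ∈ ⋃₀ ((𝓕 n : Finset (Set X)) : Set (Set X))

/-- The set of terms of an ordinal-indexed sequence, below the ordinal `o`. -/
def rangeBelow (s : Ordinal → CantorSp) (o : Ordinal) : Set CantorSp := {x | ∃ α < o, x = s α}

/-- `s`, restricted to ordinals below `frb.ord`, is a `𝔟`-scale: an unbounded,
`≤*`-increasing `𝔟`-sequence of infinite subsets of `ℕ`. -/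
def IsBScale (s : Ordinal → CantorSp) : Prop :=
  (∀ α < frb.ord, s α ∈ CInf) ∧
  UnboundedFam {f | ∃ α < frb.ord, f = enum (s α)} ∧
  ∀ α β : Ordinal, α < β → β < frb.ord → LeStar (enum (s α)) (enum (s β))

/-- `t`, restricted to ordinals below `κ.ord`, is a `κ`-tower:
`⊆*`-decreasing sequence of infinite subsets of `ℕ`. -/
def IsTower (κ : Cardinal) (t : Ordinal → CantorSp) : Prop :=
  (∀ α < κ.ord, t α ∈ CInf) ∧
  ∀ α β : Ordinal, α < β → β < κ.ord → SubStar (t β) (t α)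

/-- An unbounded `κ`-tower. -/
def IsUnboundedTower (κ : Cardinal) (t : Ordinal → CantorSp) : Prop :=
  IsTower κ t ∧ UnboundedFam {f | ∃ α < κ.ord, f = enum (t α)}

/-- `a ⊑ b`: for all but finitely many `n`, the interval `[b(n), b(n+1)]` contains at least
two elements of the set coded by `a`. -/
def SqSubset (a b : CantorSp) : Prop :=
  ∀ᶠ n in atTop,
    2 ≤ ((Finset.Icc (enum b n) (enum b (n + 1))).filter (fun k => a k = true)).card

/-- `s`, restricted to ordinals below `frb.ord`, is a `𝔟(⊑)`-scale. -/
def IsBSqScale (s : Ordinal → CantorSp) : Prop :=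
  (∀ α < frb.ord, s α ∈ CInf) ∧
  UnboundedFam {f | ∃ α < frb.ord, f = enum (s α)} ∧
  ∀ α β : Ordinal, α < β → β < frb.ord → SqSubset (s α) (s β)


/-!
Fix a family `(d i)_{i < 𝔡}` cofinal in `(ℕ → ℕ, ≤)`. By recursion on `i` choose an increasing
`u i` that is not pointwise below any `d j` or `u j` with `j < i` (fewer than `𝔡` functions never
dominate); `u i` is a staircase whose steps grow without bound but which, at infinitely many
scales `n`, meets every interval of length `n` starting below `d i n`. Let `S` be the set of
ranges of the `u i`.

As `u i ≤ b ≤ d j` forces `i ≤ j`, fewer than `𝔡` members of `S` are bounded by any `b`; so every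
open set containing `Fin` misses fewer than `𝔡` points of `S`, and `S ∪ Fin` is Menger. For each
`n`, the open sets "there is a gap of length `n + 1` starting below `m`" form an increasing cover
of `S ∪ Fin` without finite subcover. A Hurewicz selection would bound these starting points by
some `h n` for every point and almost all `n`, which fails for the `u i` with `d i ≥ h`.
-/

section Dominating

lemma exists_dominating_mk_eq_frd : ∃ D : Set (ℕ → ℕ), Dominating D ∧ #D = frd :=
  csInf_mem (s := {c | ∃ S : Set (ℕ → ℕ), Dominating S ∧ #S = c})
    ⟨_, univ, fun f => ⟨f, trivial, .of_forall fun _ => le_rfl⟩, rfl⟩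

lemma frd_le_mk {D : Set (ℕ → ℕ)} (hD : Dominating D) : frd ≤ #D :=
  csInf_le (OrderBot.bddBelow _) ⟨D, hD, rfl⟩

lemma exists_forall_not_le_of_mk_lt_frd {B : Set (ℕ → ℕ)} (hB : #B < frd) :
    ∃ φ : ℕ → ℕ, ∀ b ∈ B, ¬ φ ≤ b := by
  have hnd : ¬ Dominating B := fun hD => (frd_le_mk hD).not_gt hB
  simp only [Dominating, not_forall, not_exists, not_and] at hnd
  obtain ⟨φ, hφ⟩ := hnd
  exact ⟨φ, fun b hb hle => hφ b hb (.of_forall hle)⟩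

lemma aleph0_lt_frd : ℵ₀ < frd := by
  by_contra! h
  obtain ⟨D, hD, hcard⟩ := exists_dominating_mk_eq_frd
  obtain ⟨e, he⟩ := countable_iff_exists_subset_range.1
    (le_aleph0_iff_set_countable.1 (hcard ▸ h))
  obtain ⟨d, hdD, hd⟩ := hD fun n => (Finset.range (n + 1)).sup (fun k => e k n) + 1
  obtain ⟨k, rfl⟩ := he hdD
  obtain ⟨n, hn, hkn⟩ := (hd.and (eventually_ge_atTop k)).exists
  dsimp only at hn
  have : e k n ≤ (Finset.range (n + 1)).sup (fun k => e k n) :=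
    Finset.le_sup (f := fun k => e k n) (Finset.mem_range_succ_iff.2 hkn)
  omega

lemma LeStar.exists_le_add {f g : ℕ → ℕ} (h : LeStar f g) : ∃ N, ∀ n, f n ≤ g n + N := by
  obtain ⟨K, hK⟩ := eventually_atTop.1 h
  refine ⟨(Finset.range K).sup f, fun n => ?_⟩
  rcases lt_or_ge n K with hn | hn
  · have := Finset.le_sup (f := f) (Finset.mem_range.2 hn)
    omega
  · have := hK n hn
    omega

lemma exists_forall_le_toType_frd : ∃ d : (frd.ord).ToType → ℕ → ℕ, ∀ f, ∃ i, f ≤ d i := by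
  obtain ⟨D, hD, hcard⟩ := exists_dominating_mk_eq_frd
  have hmk : #(frd.ord).ToType = #(D × ℕ) := by
    rw [mk_ord_toType, mk_prod, lift_id, lift_id, hcard, mk_nat, mul_aleph0_eq aleph0_lt_frd.le]
  obtain ⟨e⟩ := Cardinal.eq.1 hmk
  refine ⟨fun i n => (e i).1.1 n + (e i).2, fun f => ?_⟩
  obtain ⟨d, hdD, hfd⟩ := hD f
  obtain ⟨N, hN⟩ := hfd.exists_le_add
  exact ⟨e.symm (⟨d, hdD⟩, N), fun n => by simpa using hN n⟩

lemma mk_Iic_toType_frd_lt (i : (frd.ord).ToType) : #(Iic i) < frd := by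
  rw [← Iio_insert]
  exact mk_insert_le.trans_lt (add_lt_of_lt aleph0_lt_frd.le (by simpa using mk_Iio_lt i)
    (one_lt_aleph0.trans aleph0_lt_frd))

end Dominating

lemma exists_family_forall_lt_not_le {ι : Type} [LinearOrder ι] [WellFoundedLT ι] {κ : Cardinal}
    (hκ : ℵ₀ ≤ κ) (hι : ∀ i : ι, #(Iio i) < κ) (d : ι → ℕ → ℕ) (P : ι → (ℕ → ℕ) → Prop)
    (hP : ∀ i (B : Set (ℕ → ℕ)), #B < κ → ∃ u, P i u ∧ ∀ b ∈ B, ¬ u ≤ b) :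
    ∃ u : ι → ℕ → ℕ, ∀ i, P i (u i) ∧ ∀ j < i, ¬ u i ≤ d j ∧ ¬ u i ≤ u j := by
  let B (i : ι) (prev : ∀ j < i, ℕ → ℕ) : Set (ℕ → ℕ) :=
    range (fun j : Iio i => d j) ∪ range (fun j : Iio i => prev j j.2)
  have hB i prev : #(B i prev) < κ := (mk_union_le _ _).trans_lt
    (add_lt_of_lt hκ (mk_range_le.trans_lt (hι i)) (mk_range_le.trans_lt (hι i)))
  choose v hv using fun i prev => hP i (B i prev) (hB i prev)
  let u := wellFounded_lt.fix v
  refine ⟨u, fun i => ?_⟩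
  obtain ⟨hPi, hesc⟩ := hv i (fun j _ => u j)
  rw [show u i = v i (fun j _ => u j) from wellFounded_lt.fix_eq v i]
  exact ⟨hPi, fun j hj => ⟨hesc _ (.inl ⟨⟨j, hj⟩, rfl⟩), hesc _ (.inr ⟨⟨j, hj⟩, rfl⟩)⟩⟩

section Staircase

def majorant (f : ℕ → ℕ) (n : ℕ) : ℕ := n + 1 + (Finset.range (n + 1)).sup f

lemma majorant_strictMono (f : ℕ → ℕ) : StrictMono (majorant f) :=
  strictMono_nat_of_lt_succ fun n => by
    have : (Finset.range (n + 1)).sup f ≤ (Finset.range (n + 1 + 1)).sup f :=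
      Finset.sup_mono (Finset.range_subset_range.2 (by omega))
    simp only [majorant]
    omega

lemma le_majorant (f : ℕ → ℕ) (n : ℕ) : f n ≤ majorant f n := by
  have := Finset.le_sup (f := f) (Finset.self_mem_range_succ n)
  simp only [majorant]
  omega

lemma lt_majorant (f : ℕ → ℕ) (n : ℕ) : n < majorant f n := by
  simp only [majorant]
  omega

variable (F φ : ℕ → ℕ)

noncomputable def staircaseLevel (a : ℕ) : ℕ := sInf {k | a ≤ majorant F (majorant φ k)}

/-- With `G k = majorant F (majorant φ k)`, the staircase climbs in steps of `majorant φ k` while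
its terms lie in `(G (k - 1), G k]`. So its range meets every interval of length `majorant φ k`
starting below `G k`, its steps are unbounded, and a pointwise bound `b` on it bounds
`majorant φ` by `escapeBound F b`. -/
noncomputable def staircase : ℕ → ℕ
  | 0 => 0
  | j + 1 => staircase j + majorant φ (staircaseLevel F φ (staircase j))

lemma staircaseLevel_le {a k : ℕ} (h : a ≤ majorant F (majorant φ k)) :
    staircaseLevel F φ a ≤ k :=
  Nat.sInf_le h

lemma lt_staircaseLevel {a k : ℕ} (h : majorant F (majorant φ k) < a) :
    k < staircaseLevel F φ a := by
  by_contra! hle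
  have hmem : a ≤ majorant F (majorant φ (staircaseLevel F φ a)) :=
    Nat.sInf_mem (s := {k | a ≤ majorant F (majorant φ k)})
      ⟨a, ((lt_majorant φ a).trans (lt_majorant F _)).le⟩
  have := (majorant_strictMono F).monotone ((majorant_strictMono φ).monotone hle)
  omega

lemma staircase_succ (j : ℕ) : staircase F φ (j + 1) =
    staircase F φ j + majorant φ (staircaseLevel F φ (staircase F φ j)) :=
  rfl

lemma staircase_strictMono : StrictMono (staircase F φ) :=
  strictMono_nat_of_lt_succ fun j => by
    have := lt_majorant φ (staircaseLevel F φ (staircase F φ j))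
    rw [staircase_succ]
    omega

lemma exists_add_mem_range_staircase {p k : ℕ} (hp : p ≤ majorant F (majorant φ k)) :
    ∃ i < majorant φ k, p + i ∈ range (staircase F φ) := by
  rcases Nat.eq_zero_or_pos p with rfl | hp0
  · exact ⟨0, (Nat.zero_le _).trans_lt (lt_majorant φ k), 0, rfl⟩
  obtain ⟨j, hjp, hpj⟩ := (staircase_strictMono F φ).exists_between_of_tendsto_atTop
    (staircase_strictMono F φ).tendsto_atTop hp0
  have hstep := (majorant_strictMono φ).monotone (staircaseLevel_le F φ (hjp.le.trans hp))
  rw [staircase_succ] at hpj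
  refine ⟨staircase F φ (j + 1) - p, ?_, j + 1, ?_⟩ <;> rw [staircase_succ] <;> omega

lemma exists_staircase_add_lt (n : ℕ) : ∃ j, staircase F φ j + n < staircase F φ (j + 1) := by
  have hj : majorant F (majorant φ n) < staircase F φ (majorant F (majorant φ n) + 1) :=
    (lt_add_one _).trans_le (staircase_strictMono F φ).le_apply
  have := (lt_staircaseLevel F φ hj).trans (lt_majorant φ _)
  refine ⟨majorant F (majorant φ n) + 1, ?_⟩
  rw [staircase_succ F φ (majorant F (majorant φ n) + 1)]
  omega

def escapeBound (b : ℕ → ℕ) : ℕ → ℕ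
  | 0 => b 1
  | k + 1 => (Finset.range (escapeBound b k + 1)).sup fun x => b (majorant F x + 2)

lemma majorant_succ_le_staircase (k : ℕ) :
    majorant φ (k + 1) ≤ staircase F φ (majorant F (majorant φ k) + 2) := by
  have hT : majorant F (majorant φ k) < staircase F φ (majorant F (majorant φ k) + 1) :=
    (lt_add_one _).trans_le (staircase_strictMono F φ).le_apply
  have : majorant φ (k + 1) ≤ _ := (majorant_strictMono φ).monotone (lt_staircaseLevel F φ hT)
  rw [show majorant F (majorant φ k) + 2 = majorant F (majorant φ k) + 1 + 1 from rfl,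
    staircase_succ F φ (majorant F (majorant φ k) + 1)]
  omega

lemma majorant_le_escapeBound {b : ℕ → ℕ} (hb : staircase F φ ≤ b) :
    majorant φ ≤ escapeBound F b := by
  intro k
  induction k with
  | zero =>
    calc majorant φ 0 ≤ majorant φ (staircaseLevel F φ 0) :=
          (majorant_strictMono φ).monotone (Nat.zero_le _)
      _ = staircase F φ 1 := by simp [staircase]
      _ ≤ b 1 := hb 1
  | succ k ih =>
    calc majorant φ (k + 1) ≤ b (majorant F (majorant φ k) + 2) :=
          (majorant_succ_le_staircase F φ k).trans (hb _)
      _ ≤ escapeBound F b (k + 1) :=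
          Finset.le_sup (f := fun x => b (majorant F x + 2)) (Finset.mem_range_succ_iff.2 ih)

lemma not_staircase_le {b : ℕ → ℕ} (h : ¬ φ ≤ escapeBound F b) : ¬ staircase F φ ≤ b :=
  fun hb => h fun k => (le_majorant φ k).trans (majorant_le_escapeBound F φ hb k)

lemma exists_strictMono_forall_not_le {B : Set (ℕ → ℕ)} (hB : #B < frd) :
    ∃ u : ℕ → ℕ, StrictMono u ∧ (∀ n, ∃ j, u j + n < u (j + 1)) ∧
      (∃ᶠ n in atTop, ∀ p ≤ F n, ∃ i < n, p + i ∈ range u) ∧ ∀ b ∈ B, ¬ u ≤ b := by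
  obtain ⟨φ, hφ⟩ := exists_forall_not_le_of_mk_lt_frd (mk_image_le.trans_lt hB)
  refine ⟨staircase F φ, staircase_strictMono F φ, exists_staircase_add_lt F φ, ?_,
    fun b hb => not_staircase_le F φ (hφ _ (mem_image_of_mem _ hb))⟩
  refine frequently_atTop.2 fun N => ⟨majorant φ N, (lt_majorant φ N).le, fun p hp => ?_⟩
  exact exists_add_mem_range_staircase F φ (hp.trans (le_majorant F _))

end Staircase

section CantorSpace

open scoped Classical in
noncomputable def ofRange (u : ℕ → ℕ) : CantorSp := fun n => decide (n ∈ range u)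

lemma ofRange_eq_true {u : ℕ → ℕ} {n : ℕ} : ofRange u n = true ↔ n ∈ range u := by
  simp [ofRange]

lemma ofRange_mem_CInf {u : ℕ → ℕ} (hu : StrictMono u) : ofRange u ∈ CInf := by
  simpa only [CInf, mem_ofPred_eq, ofRange_eq_true, ofPred_mem_eq] using
    infinite_range_of_injective hu.injective

lemma enum_ofRange {u : ℕ → ℕ} (hu : StrictMono u) : enum (ofRange u) = u := by
  funext n
  have h := Nat.nth_comp_of_strictMono (p := fun i => ofRange u i = true) (n := n) hu
    (fun k hk => ofRange_eq_true.1 hk) (fun hfin => absurd hfin (ofRange_mem_CInf hu))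
  simpa [enum, ofRange_eq_true] using h.symm

def gapSet (n m : ℕ) : Set CantorSp := {x | ∃ p ≤ m, ∀ i < n, x (p + i) = false}

lemma isOpen_gapSet (n m : ℕ) : IsOpen (gapSet n m) := by
  have : gapSet n m = ⋃ p ∈ Iic m, ⋂ i ∈ Iio n, {x : CantorSp | x (p + i) = false} := by
    ext; simp [gapSet]
  rw [this]
  exact isOpen_biUnion fun p _ => (finite_Iio n).isOpen_biInter fun i _ =>
    (isOpen_discrete ({false} : Set Bool)).preimage
      (continuous_apply (p + i) : Continuous fun x : CantorSp => x (p + i))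

lemma gapSet_mono {n m m' : ℕ} (h : m ≤ m') : gapSet n m ⊆ gapSet n m' :=
  fun _ ⟨p, hp, hx⟩ => ⟨p, hp.trans h, hx⟩

lemma ofRange_mem_gapSet_iff {u : ℕ → ℕ} {n m : ℕ} :
    ofRange u ∈ gapSet n m ↔ ∃ p ≤ m, ∀ i < n, p + i ∉ range u := by
  simp [gapSet, ← Bool.not_eq_true, ofRange_eq_true]

lemma ofRange_mem_gapSet {u : ℕ → ℕ} (hu : StrictMono u) {j n : ℕ} (h : u j + n < u (j + 1)) :
    ofRange u ∈ gapSet n (u j + 1) := by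
  refine ofRange_mem_gapSet_iff.2 ⟨u j + 1, le_rfl, fun i hi ⟨l, hl⟩ => ?_⟩
  have h1 : j < l := hu.lt_iff_lt.1 (by omega)
  have h2 : l < j + 1 := hu.lt_iff_lt.1 (by omega)
  omega

lemma exists_mem_gapSet_of_mem_CFin {x : CantorSp} (hx : x ∈ CFin) (n : ℕ) :
    ∃ m, x ∈ gapSet n m := by
  obtain ⟨q, hq⟩ := hx.bddAbove
  refine ⟨q + 1, q + 1, le_rfl, fun i _ => ?_⟩
  by_contra h
  have := hq (show x (q + 1 + i) = true by simpa using h)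
  omega

lemma not_CFin_subset_gapSet (n m : ℕ) : ¬ CFin ⊆ gapSet (n + 1) m := by
  intro h
  obtain ⟨p, hp, hx⟩ := h (show (fun i => decide (i < m + n + 1)) ∈ CFin from
    (finite_lt_nat (m + n + 1)).subset fun i hi => by simpa using hi)
  have := hx 0 n.succ_pos
  simp at this
  omega

end CantorSpace

lemma exists_kappaUnbounded_frd : ∃ S : Set CantorSp, S ⊆ CInf ∧ #S = frd ∧
    KappaUnbounded frd S ∧ (∀ x ∈ S, ∀ n, ∃ m, x ∈ gapSet n m) ∧
    ∀ h : ℕ → ℕ, ∃ x ∈ S, ∃ᶠ n in atTop, x ∉ gapSet n (h n) := by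
  obtain ⟨d, hd⟩ := exists_forall_le_toType_frd
  obtain ⟨u, hu⟩ := exists_family_forall_lt_not_le aleph0_lt_frd.le (by simpa using mk_Iio_lt ·) d
    (fun i u => StrictMono u ∧ (∀ n, ∃ j, u j + n < u (j + 1)) ∧
      ∃ᶠ n in atTop, ∀ p ≤ d i n, ∃ k < n, p + k ∈ range u)
    fun i B hB => by
      obtain ⟨u, hmono, hgap, hthick, hesc⟩ := exists_strictMono_forall_not_le (d i) hB
      exact ⟨u, ⟨hmono, hgap, hthick⟩, hesc⟩
  choose hP hesc using hu
  choose hmono hgap hthick using hP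
  have hinj : Function.Injective fun i => ofRange (u i) := by
    intro i j hij
    have huij : u i = u j := by
      rw [← enum_ofRange (hmono i), ← enum_ofRange (hmono j)]
      exact congrArg enum hij
    by_contra hne
    rcases lt_or_gt_of_ne hne with h | h
    · exact (hesc j i h).2 huij.ge
    · exact (hesc i j h).2 huij.le
  have hcard : #(range fun i => ofRange (u i)) = frd := by
    rw [mk_range_eq _ hinj, mk_ord_toType]
  refine ⟨range fun i => ofRange (u i), ?_, hcard, ⟨hcard.ge, fun b => ?_⟩, ?_, fun h => ?_⟩
  · rintro _ ⟨i, rfl⟩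
    exact ofRange_mem_CInf (hmono i)
  · obtain ⟨i₀, hi₀⟩ := hd b
    have hsub : {s ∈ range fun i => ofRange (u i) | ∀ n, enum s n ≤ b n} ⊆
        (fun i => ofRange (u i)) '' Iic i₀ := by
      rintro _ ⟨⟨i, rfl⟩, hb⟩
      refine ⟨i, not_lt.1 fun hlt => (hesc i i₀ hlt).1 fun n => ?_, rfl⟩
      exact (enum_ofRange (hmono i) ▸ hb n).trans (hi₀ n)
    exact ((mk_le_mk_of_subset hsub).trans mk_image_le).trans_lt (mk_Iic_toType_frd_lt i₀)
  · rintro _ ⟨i, rfl⟩ n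
    obtain ⟨j, hj⟩ := hgap i n
    exact ⟨_, ofRange_mem_gapSet (hmono i) hj⟩
  · obtain ⟨i, hi⟩ := hd h
    refine ⟨_, ⟨i, rfl⟩, (hthick i).mono fun n hn hmem => ?_⟩
    obtain ⟨p, hp, hfree⟩ := ofRange_mem_gapSet_iff.1 hmem
    obtain ⟨k, hk, hpk⟩ := hn p (hp.trans (hi n))
    exact hfree k hk hpk

section Concentration

lemma exists_gap_subset {U : Set CantorSp} (hU : IsOpen U) (hCFin : CFin ⊆ U) (n : ℕ) :
    ∃ m, {x : CantorSp | ∀ i ∈ Ico n m, x i = false} ⊆ U := by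
  refine exists_subset_nhds_of_isCompact
    (V := fun m => {x : CantorSp | ∀ i ∈ Ico n m, x i = false})
    (Antitone.directed_ge fun m m' h x hx i hi => hx i ⟨hi.1, hi.2.trans_le h⟩)
    (fun m => IsClosed.isCompact ?_) fun x hx => hU.mem_nhds (hCFin ?_)
  · simp only [ofPred_forall]
    exact isClosed_biInter fun i _ => isClosed_eq (continuous_apply i) continuous_const
  · simp only [mem_iInter, mem_ofPred_eq] at hx
    refine (finite_lt_nat n).subset fun i hi => show i < n from not_le.1 fun hni => ?_
    simp [hx (i + 1) i ⟨hni, lt_add_one i⟩] at hi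

lemma Nat.le_count_of_forall_exists_mem_Ico {p : ℕ → Prop} [DecidablePred p] {c : ℕ → ℕ}
    (h : ∀ k, ∃ i ∈ Ico (c k) (c (k + 1)), p i) (k : ℕ) : k ≤ Nat.count p (c k) := by
  induction k with
  | zero => exact Nat.zero_le _
  | succ k ih =>
    obtain ⟨i, ⟨hi1, hi2⟩, hpi⟩ := h k
    calc k + 1 ≤ Nat.count p i + 1 := by gcongr; exact ih.trans (Nat.count_monotone p hi1)
      _ = Nat.count p (i + 1) := (Nat.count_succ_eq_succ_count_iff.2 hpi).symm
      _ ≤ Nat.count p (c (k + 1)) := Nat.count_monotone p hi2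

lemma exists_enum_lt_of_isOpen {U : Set CantorSp} (hU : IsOpen U) (hCFin : CFin ⊆ U) :
    ∃ b : ℕ → ℕ, ∀ x ∉ U, ∀ k, enum x k < b k := by
  choose m hm using exists_gap_subset hU hCFin
  refine ⟨fun k => m^[k + 1] 0, fun x hx k => Nat.nth_lt_of_lt_count ?_⟩
  have hmeet : ∀ k, ∃ i ∈ Ico (m^[k] 0) (m^[k + 1] 0), x i = true := by
    intro k
    by_contra! h
    rw [Function.iterate_succ_apply'] at h
    exact hx (hm _ fun i hi => by simpa using h i hi)
  exact (Nat.le_count_of_forall_exists_mem_Ico hmeet (k + 1)).trans_lt' (lt_add_one k)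

lemma KappaUnbounded.kappaConcentrated_union_CFin {κ : Cardinal} {S : Set CantorSp}
    (h : KappaUnbounded κ S) : KappaConcentrated κ (S ∪ CFin) := by
  refine ⟨h.1.trans (mk_le_mk_of_subset subset_union_left), fun U hU hCFin => ?_⟩
  obtain ⟨b, hb⟩ := exists_enum_lt_of_isOpen hU hCFin
  refine (mk_le_mk_of_subset ?_).trans_lt (h.2 b)
  rintro x ⟨hxS | hxF, hxU⟩
  · exact ⟨hxS, fun n => (hb x hxU n).le⟩
  · exact absurd (hCFin hxF) hxU

end Concentration

section Menger

lemma exists_finite_subfamilies_of_mk_lt_frd {X : Type} {𝒰 : ℕ → Set (Set X)}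
    (h𝒰 : ∀ n, (𝒰 n).Countable) {Y : Set X} (hY : #Y < frd) (hcov : ∀ n, Y ⊆ ⋃₀ 𝒰 n) :
    ∃ 𝓕 : ℕ → Set (Set X), (∀ n, 𝓕 n ⊆ 𝒰 n ∧ (𝓕 n).Finite) ∧ Y ⊆ ⋃₀ ⋃ n, 𝓕 n := by
  choose e he using fun n => countable_iff_exists_subset_range.1 (h𝒰 n)
  have hpick : ∀ y : Y, ∀ n, ∃ k, e n k ∈ 𝒰 n ∧ (y : X) ∈ e n k := by
    intro y n
    obtain ⟨A, hA, hyA⟩ := hcov n y.2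
    obtain ⟨k, rfl⟩ := he n hA
    exact ⟨k, hA, hyA⟩
  choose f hf using hpick
  obtain ⟨φ, hφ⟩ := exists_forall_not_le_of_mk_lt_frd (B := range f) (mk_range_le.trans_lt hY)
  refine ⟨fun n => e n '' Iic (φ n) ∩ 𝒰 n,
    fun n => ⟨inter_subset_right, ((finite_Iic _).image _).subset inter_subset_left⟩,
    fun y hy => ?_⟩
  obtain ⟨n, hn⟩ := not_forall.1 (hφ _ (mem_range_self ⟨y, hy⟩))
  exact ⟨_, mem_iUnion.2 ⟨n, mem_image_of_mem _ (not_le.1 hn).le, (hf _ n).1⟩, (hf _ n).2⟩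

lemma menger_of_countable {X : Type} [TopologicalSpace X] [SecondCountableTopology X]
    {C : Set X} (hC : C.Countable) (hsmall : ∀ U, IsOpen U → C ⊆ U → #(Uᶜ : Set X) < frd) :
    Menger X := by
  intro 𝒰 h𝒰
  choose T hTc hT𝒰 hTU using fun n => TopologicalSpace.isOpen_sUnion_countable (𝒰 n) (h𝒰 n).1
  have hcov : ∀ (Y : Set X) n, Y ⊆ ⋃₀ T n := fun Y n => by
    rw [hTU, (h𝒰 n).2]
    exact subset_univ Y
  obtain ⟨𝓕, h𝓕, hC𝓕⟩ := exists_finite_subfamilies_of_mk_lt_frd hTc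
    ((le_aleph0_iff_set_countable.2 hC).trans_lt aleph0_lt_frd) (hcov C)
  have hU : IsOpen (⋃₀ ⋃ n, 𝓕 n) := isOpen_sUnion fun A hA => by
    obtain ⟨n, hn⟩ := mem_iUnion.1 hA
    exact (h𝒰 n).1 A (hT𝒰 n ((h𝓕 n).1 hn))
  obtain ⟨𝓖, h𝓖, hU𝓖⟩ := exists_finite_subfamilies_of_mk_lt_frd hTc (hsmall _ hU hC𝓕) (hcov _)
  refine ⟨fun n => 𝓕 n ∪ 𝓖 n, fun n => ⟨union_subset ((h𝓕 n).1.trans (hT𝒰 n))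
    ((h𝓖 n).1.trans (hT𝒰 n)), (h𝓕 n).2.union (h𝓖 n).2⟩, eq_univ_of_forall fun x => ?_⟩
  by_cases hx : x ∈ ⋃₀ ⋃ n, 𝓕 n
  · exact sUnion_mono (iUnion_mono fun n => subset_union_left) hx
  · exact sUnion_mono (iUnion_mono fun n => subset_union_right) (hU𝓖 hx)

lemma countable_CFin : CFin.Countable :=
  (countable_range fun s : Finset ℕ => fun n => decide (n ∈ s)).mono
    fun x (hx : {n | x n = true}.Finite) => mem_range.2 ⟨hx.toFinset, funext fun n => by simp⟩

lemma menger_of_kappaConcentrated {X : Set CantorSp} (hX : CFin ⊆ X)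
    (h : KappaConcentrated frd X) : Menger X := by
  refine menger_of_countable (countable_CFin.preimage Subtype.val_injective) fun U hU hCU => ?_
  obtain ⟨V, hV, rfl⟩ := isOpen_induced_iff.1 hU
  have hCFinV : CFin ⊆ V := fun x hx => hCU (show (⟨x, hX hx⟩ : X) ∈ Subtype.val ⁻¹' CFin from hx)
  calc #((Subtype.val ⁻¹' V)ᶜ : Set X) = #(Subtype.val '' (Subtype.val ⁻¹' Vᶜ : Set X)) :=
        (mk_image_eq Subtype.val_injective).symm
    _ = #(X \ V : Set CantorSp) := by rw [Subtype.image_preimage_coe]; rfl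
    _ < frd := h.2 V hV hCFinV

end Menger

section Hurewicz

lemma exists_sUnion_subset_of_subset_range {α : Type*} {W : ℕ → Set α} (hW : Monotone W)
    {𝓕 : Set (Set α)} (hfin : 𝓕.Finite) (hsub : 𝓕 ⊆ range W) : ∃ M, ⋃₀ 𝓕 ⊆ W M := by
  choose g hg using fun A : 𝓕 => hsub A.2
  have := hfin.to_subtype
  obtain ⟨M, hM⟩ := (finite_range g).bddAbove
  refine ⟨M, sUnion_subset fun A hA => ?_⟩
  have := hW (hM (mem_range_self ⟨A, hA⟩))
  rwa [hg] at this

lemma not_hurewicz_of_frequently_not_mem_gapSet {X : Set CantorSp} (hCFin : CFin ⊆ X)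
    (hgap : ∀ x ∈ X, ∀ n, ∃ m, x ∈ gapSet n m)
    (hthick : ∀ h : ℕ → ℕ, ∃ x ∈ X, ∃ᶠ n in atTop, x ∉ gapSet n (h n)) : ¬ Hurewicz X := by
  intro hH
  let W (n m : ℕ) : Set X := Subtype.val ⁻¹' gapSet (n + 1) m
  have hbound n {𝓕} (hsub : 𝓕 ⊆ range (W n)) (hfin : 𝓕.Finite) : ∃ M, ⋃₀ 𝓕 ⊆ W n M :=
    exists_sUnion_subset_of_subset_range (fun _ _ h => preimage_mono (gapSet_mono h)) hfin hsub
  have hopen n : IsOpenCover (range (W n)) := by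
    refine ⟨?_, eq_univ_of_forall fun x => ?_⟩
    · rintro _ ⟨m, rfl⟩
      exact (isOpen_gapSet _ _).preimage continuous_subtype_val
    · obtain ⟨m, hm⟩ := hgap x x.2 (n + 1)
      exact ⟨W n m, mem_range_self m, hm⟩
  have hnofin n : ¬ ∃ 𝓕 ⊆ range (W n), 𝓕.Finite ∧ ⋃₀ 𝓕 = Set.univ := by
    rintro ⟨𝓕, hsub, hfin, hcov⟩
    obtain ⟨M, hM⟩ := hbound n hsub hfin
    rw [hcov] at hM
    exact not_CFin_subset_gapSet n M fun x hx => hM (mem_univ ⟨x, hCFin hx⟩)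
  obtain ⟨𝓕, h𝓕, hev⟩ := hH (fun n => range (W n)) hopen hnofin
  choose M hM using fun n => hbound n (h𝓕 n).1 (h𝓕 n).2
  obtain ⟨x, hxX, hx⟩ := hthick fun n => M (n - 1)
  have hev' : ∀ᶠ n in atTop, x ∈ gapSet n (M (n - 1)) := by
    filter_upwards [(tendsto_sub_atTop_nat 1).eventually (hev ⟨x, hxX⟩),
      eventually_ge_atTop 1] with n hn h1
    simpa [W, Nat.sub_add_cancel h1] using hM (n - 1) hn
  obtain ⟨n, hn, hn'⟩ := (hx.and_eventually hev').exists
  exact hn hn'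

end Hurewicz

/-- There is a set `S ⊆ [ℕ]^∞` of cardinality `𝔡` such that the subspace
`S ∪ Fin` of the Cantor space is Menger but not Hurewicz. -/
theorem stmt1 :
    ∃ S : Set CantorSp, S ⊆ CInf ∧ #S = frd ∧
      Menger ↥(S ∪ CFin) ∧ ¬ Hurewicz ↥(S ∪ CFin) := by
  obtain ⟨S, hSInf, hScard, hunb, hgap, hthick⟩ := exists_kappaUnbounded_frd
  refine ⟨S, hSInf, hScard,
    menger_of_kappaConcentrated subset_union_right hunb.kappaConcentrated_union_CFin,
    not_hurewicz_of_frequently_not_mem_gapSet subset_union_right ?_ fun h => ?_⟩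
  · rintro x (hx | hx) n
    exacts [hgap x hx n, exists_mem_gapSet_of_mem_CFin hx n]
  · obtain ⟨x, hx, hfreq⟩ := hthick h
    exact ⟨x, .inl hx, hfreq⟩
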